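/- Fix an integer K ≥ 1 and for each integer x ≥ 1 set N₁ = 3, J = xK and N₂ = x²K. Then the Jaccard similarity between 𝐔_{K,3,x²K,xK} and 𝐕_{K,3,x²K} satisfies 0 ≤ S(𝐔_{K,3,x²K,xK}, 𝐕_{K,3,x²K}) < (4K³x³ + 4K²x²)/((1/2)K³x⁴ − (1/2)K²x² + 3K), and consequently S(𝐔_{K,3,x²K,xK}, 𝐕_{K,3,x²K}) → 0 as x → ∞. -/

import Mathlib

open scoped Classical

noncomputable section

namespace BadComm

variable {V : Type*} [Fintype V]

/-- The finset of edges of a simple graph `G`. -/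
def edgeFin (G : SimpleGraph V) : Finset (Sym2 V) :=
  Finset.univ.filter (fun e => e ∈ G.edgeSet)

/-- The number of edges `m` of `G`. -/
def numEdges (G : SimpleGraph V) : ℕ := (edgeFin G).card

/-- The degree of a node. -/
def deg (G : SimpleGraph V) (v : V) : ℕ := (Finset.univ.filter (fun w => G.Adj v w)).card

/-- A clustering is encoded as a labelling `c : V → ℕ`; cluster `k` is the set of nodes
with label `k`.  `clusterDeg G c k` is the total degree of cluster `k`. -/
def clusterDeg (G : SimpleGraph V) (c : V → ℕ) (k : ℕ) : ℕ :=
  ∑ v ∈ Finset.univ.filter (fun v => c v = k), deg G v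

/-- An unordered pair is intracluster when all of its members carry the same label. -/
def sameCluster (c : V → ℕ) (p : Sym2 V) : Prop :=
  ∀ u ∈ p, ∀ v ∈ p, c u = c v

/-- The number of intracluster edges, `∑ₖ |Eₖ|`. -/
def intraEdges (G : SimpleGraph V) (c : V → ℕ) : ℕ :=
  ((edgeFin G).filter (fun e => sameCluster c e)).card

/-- The number of extracluster edges. -/
def extraEdges (G : SimpleGraph V) (c : V → ℕ) : ℕ :=
  ((edgeFin G).filter (fun e => ¬ sameCluster c e)).card

/-- The intracluster edge fraction `Q_f = (∑ₖ |Eₖ|)/m`. -/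
def Qf (G : SimpleGraph V) (c : V → ℕ) : ℝ := (intraEdges G c : ℝ) / (numEdges G : ℝ)

/-- The null-model term `Q_0 = ∑ₖ (deg(Vₖ)/(2m))²` (summed over the nonempty clusters). -/
def Q0 (G : SimpleGraph V) (c : V → ℕ) : ℝ :=
  ∑ k ∈ Finset.univ.image c, ((clusterDeg G c k : ℝ) / (2 * (numEdges G : ℝ))) ^ 2

/-- Newman's modularity `Q_N = Q_f - Q_0`. -/
def QN (G : SimpleGraph V) (c : V → ℕ) : ℝ := Qf G c - Q0 G c

/-- The number of (nonempty) clusters of a labelling. -/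
def numClusters (c : V → ℕ) : ℕ := (Finset.univ.image c).card

/-- The unordered pairs of distinct nodes. -/
def offDiagPairs (V : Type*) [Fintype V] : Finset (Sym2 V) :=
  Finset.univ.filter (fun p => ¬ p.IsDiag)

/-- Number of node pairs in the same cluster under both clusterings. -/
def a11 (c1 c2 : V → ℕ) : ℕ :=
  ((offDiagPairs V).filter (fun p => sameCluster c1 p ∧ sameCluster c2 p)).card

/-- Number of node pairs in the same cluster under `c1` but not under `c2`. -/
def a10 (c1 c2 : V → ℕ) : ℕ :=
  ((offDiagPairs V).filter (fun p => sameCluster c1 p ∧ ¬ sameCluster c2 p)).card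

/-- Number of node pairs in the same cluster under `c2` but not under `c1`. -/
def a01 (c1 c2 : V → ℕ) : ℕ :=
  ((offDiagPairs V).filter (fun p => ¬ sameCluster c1 p ∧ sameCluster c2 p)).card

/-- The Jaccard similarity index of two clusterings. -/
def jaccard (c1 c2 : V → ℕ) : ℝ :=
  (a11 c1 c2 : ℝ) / ((a10 c1 c2 : ℝ) + (a01 c1 c2 : ℝ) + (a11 c1 c2 : ℝ))

/-- Number of (unordered) node pairs lying in the same cluster. -/
def samePairCount (c : V → ℕ) : ℕ :=
  ((offDiagPairs V).filter (fun p => sameCluster c p)).card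

/-- The nodes `0,…,n-1` are split into consecutive blocks of alternating sizes
`N₁,N₂,N₁,N₂,…`; `blockIdx N1 N2 v` is the index of the block of node `v`. -/
def blockIdx (N1 N2 v : ℕ) : ℕ :=
  2 * (v / (N1 + N2)) + (if v % (N1 + N2) < N1 then 0 else 1)

/-- The graph `G_{K,N₁,N₂}`: a disjoint union of `K` paths on `N₁` nodes and `K` paths on
`N₂` nodes, arranged as alternating consecutive blocks of `{0,…,K(N₁+N₂)-1}`. -/
def graphG (K N1 N2 : ℕ) : SimpleGraph (Fin (K * (N1 + N2))) where
  Adj u v := (u.val + 1 = v.val ∨ v.val + 1 = u.val) ∧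
             blockIdx N1 N2 u.val = blockIdx N1 N2 v.val
  symm := ⟨by rintro u v ⟨h1, h2⟩; exact ⟨h1.symm, h2.symm⟩⟩
  loopless := ⟨by rintro u ⟨h1 | h1, -⟩ <;> omega⟩

/-- The connected graph `H_{K,N₁,N₂}`: the path on all of `{0,…,K(N₁+N₂)-1}` together with,
inside each block, all chords joining nodes of the block at distance two. -/
def graphH (K N1 N2 : ℕ) : SimpleGraph (Fin (K * (N1 + N2))) where
  Adj u v := (u.val + 1 = v.val ∨ v.val + 1 = u.val) ∨
             ((u.val + 2 = v.val ∨ v.val + 2 = u.val) ∧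
              blockIdx N1 N2 u.val = blockIdx N1 N2 v.val)
  symm := ⟨by
    rintro u v (h1 | ⟨h2, h3⟩)
    · exact Or.inl h1.symm
    · exact Or.inr ⟨h2.symm, h3.symm⟩⟩
  loopless := ⟨by rintro u ((h | h) | ⟨h | h, -⟩) <;> omega⟩

/-- The natural clustering `𝐕_{K,N₁,N₂}`: the clusters are the `2K` blocks. -/
def naturalLabel (N1 N2 : ℕ) {n : ℕ} : Fin n → ℕ := fun v => blockIdx N1 N2 v.val

/-- The balanced clustering `𝐔_{K,N₁,N₂,J}` with `L = ⌊n/J⌋`: clusters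
`U_j = {(j-1)L+1,…,jL}` for `j = 1,…,J`, plus the remainder cluster `U_{J+1}`. -/
def uLabel (J : ℕ) {n : ℕ} : Fin n → ℕ := fun v => min (v.val / (n / J)) J

end BadComm

/-! The Jaccard similarity is at most the ratio of the numbers of same-cluster pairs of the two
clusterings, since `a₁₁` counts pairs together under both and `a₀₁ + a₁₁` counts the pairs together
under `V`. The `xK` clusters of `U` have at most `xK + 3` nodes and the remainder fewer than `xK`,
so `U` has fewer than `4K³x³ + 4K²x²` such pairs, whereas `V` has exactly
`K (3 + C(x²K, 2)) = K³x⁴/2 − K²x²/2 + 3K`. The resulting bound is at most `16 / x` once `x ≥ 2`. -/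

namespace BadComm

open Finset

section Clusterings

variable {V : Type*}

theorem sameCluster_mk_iff (c : V → ℕ) (u v : V) : sameCluster c s(u, v) ↔ c u = c v := by
  refine ⟨fun h => h u (Sym2.mem_mk_left u v) v (Sym2.mem_mk_right u v), fun h a ha b hb => ?_⟩
  rw [Sym2.mem_iff] at ha hb
  rcases ha with rfl | rfl <;> rcases hb with rfl | rfl <;> simp [h]

variable [Fintype V]

theorem samePairCount_eq_sum_choose (c : V → ℕ) (s : Finset ℕ) (hs : ∀ v, c v ∈ s) :
    samePairCount c = ∑ k ∈ s, (#{v | c v = k}).choose 2 := by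
  have hunion : (offDiagPairs V).filter (sameCluster c) =
      s.biUnion fun k => ({v | c v = k} : Finset V).offDiag.image (Function.uncurry Sym2.mk) := by
    ext p
    induction p using Sym2.ind with
    | _ u v =>
    simp only [offDiagPairs, sameCluster_mk_iff, mem_filter, mem_univ, Sym2.mk_isDiag_iff,
      true_and, mem_biUnion, mem_image, mem_offDiag, Prod.exists, Function.uncurry_apply_pair,
      Sym2.eq_iff]
    constructor
    · rintro ⟨hne, h⟩
      exact ⟨c u, hs u, u, v, ⟨rfl, h.symm, hne⟩, Or.inl ⟨rfl, rfl⟩⟩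
    · rintro ⟨k, -, a, b, ⟨ha, hb, hne⟩, ⟨rfl, rfl⟩ | ⟨rfl, rfl⟩⟩
      exacts [⟨hne, ha.trans hb.symm⟩, ⟨Ne.symm hne, hb.trans ha.symm⟩]
  rw [samePairCount, hunion, card_biUnion]
  · exact sum_congr rfl fun k _ => Sym2.card_image_offDiag _
  · intro k₁ _ k₂ _ hne
    rw [Function.onFun, disjoint_left]
    rintro _ hp hp'
    obtain ⟨⟨a, b⟩, hab, rfl⟩ := mem_image.1 hp
    obtain ⟨⟨a', b'⟩, hab', he⟩ := mem_image.1 hp'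
    simp only [mem_offDiag, mem_filter, mem_univ, true_and] at hab hab'
    rcases Sym2.eq_iff.1 he with ⟨rfl, rfl⟩ | ⟨rfl, rfl⟩
    exacts [hne (hab.1.symm.trans hab'.1), hne (hab.2.1.symm.trans hab'.1)]

theorem a11_le_samePairCount_left (c₁ c₂ : V → ℕ) : a11 c₁ c₂ ≤ samePairCount c₁ :=
  card_le_card (monotone_filter_right _ fun _ _ => And.left)

theorem a01_add_a11 (c₁ c₂ : V → ℕ) : a01 c₁ c₂ + a11 c₁ c₂ = samePairCount c₂ := by
  rw [samePairCount, ← card_filter_add_card_filter_not (sameCluster c₁), filter_filter,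
    filter_filter, add_comm, a01, a11]
  simp only [and_comm]

theorem jaccard_nonneg (c₁ c₂ : V → ℕ) : 0 ≤ jaccard c₁ c₂ := by
  unfold jaccard
  positivity

theorem jaccard_le_samePairCount_div (c₁ c₂ : V → ℕ) :
    jaccard c₁ c₂ ≤ samePairCount c₁ / samePairCount c₂ := by
  have hsum := a01_add_a11 c₁ c₂
  rcases (samePairCount c₂).eq_zero_or_pos with h0 | hpos
  · have : a11 c₁ c₂ = 0 := by omega
    simp [jaccard, this, h0]
  calc jaccard c₁ c₂ ≤ a11 c₁ c₂ / samePairCount c₂ := by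
        unfold jaccard
        gcongr
        rw [← hsum]
        push_cast
        linarith [(a10 c₁ c₂).cast_nonneg (α := ℝ)]
    _ ≤ samePairCount c₁ / samePairCount c₂ := by
        gcongr
        exact a11_le_samePairCount_left c₁ c₂

end Clusterings

theorem card_filter_fin_val_mem_Ico (n a b : ℕ) :
    #{v : Fin n | a ≤ (v : ℕ) ∧ (v : ℕ) < b} = min n b - a := by
  rw [← card_map Fin.valEmbedding, map_filter', Fin.map_valEmbedding_univ, ← Nat.card_Ico]
  congr 1
  ext m
  simp only [Fin.valEmbedding_apply, Fin.exists_iff, exists_and_left, exists_prop,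
    exists_eq_right_right, mem_filter, mem_Iio, mem_Ico, lt_inf_iff]
  omega

theorem sum_range_two_mul {M : Type*} [AddCommMonoid M] (f : ℕ → M) (K : ℕ) :
    ∑ k ∈ range (2 * K), f k = ∑ i ∈ range K, (f (2 * i) + f (2 * i + 1)) := by
  induction K with
  | zero => simp
  | succ K ih => rw [Nat.mul_succ, sum_range_succ, sum_range_succ, sum_range_succ, ih, add_assoc]

section NaturalClustering

variable {N₁ N₂ : ℕ}

theorem blockIdx_eq_two_mul_iff (hN : 0 < N₁ + N₂) (v i : ℕ) :
    blockIdx N₁ N₂ v = 2 * i ↔ (N₁ + N₂) * i ≤ v ∧ v < (N₁ + N₂) * i + N₁ := by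
  have hv := Nat.div_add_mod v (N₁ + N₂)
  have hdiv := Nat.div_eq_iff hN (x := v) (y := i)
  rw [mul_comm i] at hdiv
  unfold blockIdx
  by_cases h : v / (N₁ + N₂) = i
  · rw [h] at hv ⊢
    split <;> omega
  · split <;> omega

theorem blockIdx_eq_two_mul_add_one_iff (hN : 0 < N₁ + N₂) (v i : ℕ) :
    blockIdx N₁ N₂ v = 2 * i + 1 ↔ (N₁ + N₂) * i + N₁ ≤ v ∧ v < (N₁ + N₂) * i + (N₁ + N₂) := by
  have hv := Nat.div_add_mod v (N₁ + N₂)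
  have hdiv := Nat.div_eq_iff hN (x := v) (y := i)
  rw [mul_comm i] at hdiv
  unfold blockIdx
  by_cases h : v / (N₁ + N₂) = i
  · rw [h] at hv ⊢
    split <;> omega
  · split <;> omega

theorem card_naturalLabel_eq_two_mul (hN : 0 < N₁ + N₂) {K i : ℕ} (hi : i < K) :
    #{v : Fin (K * (N₁ + N₂)) | naturalLabel N₁ N₂ v = 2 * i} = N₁ := by
  have hle : (N₁ + N₂) * i + (N₁ + N₂) ≤ K * (N₁ + N₂) := by
    rw [mul_comm K, ← Nat.mul_succ]
    exact Nat.mul_le_mul_left _ hi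
  simp only [naturalLabel, blockIdx_eq_two_mul_iff hN, card_filter_fin_val_mem_Ico]
  omega

theorem card_naturalLabel_eq_two_mul_add_one (hN : 0 < N₁ + N₂) {K i : ℕ} (hi : i < K) :
    #{v : Fin (K * (N₁ + N₂)) | naturalLabel N₁ N₂ v = 2 * i + 1} = N₂ := by
  have hle : (N₁ + N₂) * i + (N₁ + N₂) ≤ K * (N₁ + N₂) := by
    rw [mul_comm K, ← Nat.mul_succ]
    exact Nat.mul_le_mul_left _ hi
  simp only [naturalLabel, blockIdx_eq_two_mul_add_one_iff hN, card_filter_fin_val_mem_Ico]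
  omega

theorem naturalLabel_lt (K : ℕ) (v : Fin (K * (N₁ + N₂))) : naturalLabel N₁ N₂ v < 2 * K := by
  have hq : (v : ℕ) / (N₁ + N₂) < K :=
    Nat.div_lt_of_lt_mul (v.isLt.trans_eq (mul_comm _ _))
  unfold naturalLabel blockIdx
  split <;> omega

theorem samePairCount_naturalLabel (hN : 0 < N₁ + N₂) (K : ℕ) :
    samePairCount (naturalLabel N₁ N₂ : Fin (K * (N₁ + N₂)) → ℕ) =
      K * (N₁.choose 2 + N₂.choose 2) := by
  rw [samePairCount_eq_sum_choose _ (range (2 * K)) fun v => mem_range.2 (naturalLabel_lt K v),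
    sum_range_two_mul]
  calc _ = ∑ i ∈ range K, (N₁.choose 2 + N₂.choose 2) := sum_congr rfl fun i hi => by
        rw [card_naturalLabel_eq_two_mul hN (mem_range.1 hi),
          card_naturalLabel_eq_two_mul_add_one hN (mem_range.1 hi)]
    _ = K * (N₁.choose 2 + N₂.choose 2) := by simp

end NaturalClustering

section BalancedClustering

variable {n J : ℕ}

theorem card_uLabel_eq_le (hL : 0 < n / J) {k : ℕ} (hk : k < J) :
    #{v : Fin n | uLabel J v = k} ≤ n / J := by
  calc #{v : Fin n | uLabel J v = k}
      ≤ #{v : Fin n | n / J * k ≤ (v : ℕ) ∧ (v : ℕ) < n / J * k + n / J} := by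
        refine card_le_card (monotone_filter_right _ fun v _ hv => ?_)
        have hdiv : (v : ℕ) / (n / J) = k := by
          unfold uLabel at hv
          omega
        rw [Nat.div_eq_iff hL, mul_comm k] at hdiv
        omega
    _ ≤ n / J := by
        rw [card_filter_fin_val_mem_Ico]
        omega

theorem card_uLabel_eq_self_le : #{v : Fin n | uLabel J v = J} ≤ n % J := by
  calc #{v : Fin n | uLabel J v = J} ≤ #{v : Fin n | J * (n / J) ≤ (v : ℕ) ∧ (v : ℕ) < n} := by
        refine card_le_card (monotone_filter_right _ fun v _ hv => ⟨?_, v.isLt⟩)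
        exact Nat.mul_le_of_le_div _ _ _ (min_eq_right_iff.1 hv)
    _ = n % J := by
        rw [card_filter_fin_val_mem_Ico, min_self, Nat.mod_eq_sub_mul_div]

theorem samePairCount_uLabel_le (hL : 0 < n / J) :
    samePairCount (uLabel J : Fin n → ℕ) ≤ J * (n / J).choose 2 + (n % J).choose 2 := by
  have hs (v : Fin n) : uLabel J v ∈ range (J + 1) :=
    mem_range.2 (Nat.lt_succ_of_le (min_le_right _ _))
  rw [samePairCount_eq_sum_choose _ _ hs, sum_range_succ]
  gcongr
  · calc ∑ k ∈ range J, (#{v : Fin n | uLabel J v = k}).choose 2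
        ≤ ∑ k ∈ range J, (n / J).choose 2 :=
          sum_le_sum fun k hk => Nat.choose_le_choose 2 (card_uLabel_eq_le hL (mem_range.1 hk))
      _ = J * (n / J).choose 2 := by simp
  · exact card_uLabel_eq_self_le

end BalancedClustering

section ScaledFamily

variable {K x : ℕ}

theorem samePairCount_uLabel_mul_lt (hK : 1 ≤ K) (hx : 1 ≤ x) :
    (samePairCount (uLabel (x * K) : Fin (K * (3 + x ^ 2 * K)) → ℕ) : ℝ) <
      4 * (K : ℝ) ^ 3 * (x : ℝ) ^ 3 + 4 * (K : ℝ) ^ 2 * (x : ℝ) ^ 2 := by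
  set J := x * K with hJ
  have hn : K * (3 + x ^ 2 * K) = J * J + 3 * K := by ring
  have hJ1 : 1 ≤ J := Nat.mul_pos hx hK
  have hKJ : K ≤ J := Nat.le_mul_of_pos_left K hx
  have hL : K * (3 + x ^ 2 * K) / J ≤ J + 3 := Nat.div_le_of_le_mul (by rw [hn]; nlinarith)
  have hL0 : 0 < K * (3 + x ^ 2 * K) / J := Nat.div_pos (by rw [hn]; nlinarith) hJ1
  have hcount := (samePairCount_uLabel_le hL0).trans <| add_le_add
    (Nat.mul_le_mul_left J (Nat.choose_le_choose 2 hL))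
    (Nat.choose_le_choose 2 (Nat.mod_lt _ hJ1).le)
  have hJ1real : (1 : ℝ) ≤ J := by exact_mod_cast hJ1
  calc _ ≤ ((J * (J + 3).choose 2 + J.choose 2 : ℕ) : ℝ) := by exact_mod_cast hcount
    _ = (J : ℝ) * ((J + 3) * (J + 2) / 2) + J * (J - 1) / 2 := by
        push_cast [Nat.cast_choose_two]
        ring
    _ < 4 * (J : ℝ) ^ 3 + 4 * (J : ℝ) ^ 2 := by nlinarith
    _ = _ := by
        rw [hJ]
        push_cast
        ring

theorem samePairCount_naturalLabel_three_cast :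
    (samePairCount (naturalLabel 3 (x ^ 2 * K) : Fin (K * (3 + x ^ 2 * K)) → ℕ) : ℝ) =
      (1 / 2) * (K : ℝ) ^ 3 * (x : ℝ) ^ 4 - (1 / 2) * (K : ℝ) ^ 2 * (x : ℝ) ^ 2 + 3 * (K : ℝ) := by
  rw [samePairCount_naturalLabel (by norm_num)]
  push_cast [Nat.cast_choose_two]
  ring

theorem jaccard_uLabel_naturalLabel_lt (hK : 1 ≤ K) (hx : 1 ≤ x) :
    jaccard (uLabel (x * K) : Fin (K * (3 + x ^ 2 * K)) → ℕ) (naturalLabel 3 (x ^ 2 * K)) <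
      (4 * (K : ℝ) ^ 3 * (x : ℝ) ^ 3 + 4 * (K : ℝ) ^ 2 * (x : ℝ) ^ 2) /
        ((1 / 2) * (K : ℝ) ^ 3 * (x : ℝ) ^ 4 - (1 / 2) * (K : ℝ) ^ 2 * (x : ℝ) ^ 2
          + 3 * (K : ℝ)) := by
  have hpos : 0 < samePairCount (naturalLabel 3 (x ^ 2 * K) : Fin (K * (3 + x ^ 2 * K)) → ℕ) := by
    rw [samePairCount_naturalLabel (by norm_num)]
    exact Nat.mul_pos hK (Nat.add_pos_left (by decide) _)
  calc _ ≤ _ := jaccard_le_samePairCount_div _ _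
    _ < _ := by
        rw [← samePairCount_naturalLabel_three_cast]
        gcongr
        exact samePairCount_uLabel_mul_lt hK hx

end ScaledFamily

theorem jaccard_bound_le_sixteen_div {K x : ℝ} (hK : 1 ≤ K) (hx : 2 ≤ x) :
    (4 * K ^ 3 * x ^ 3 + 4 * K ^ 2 * x ^ 2) /
        ((1 / 2) * K ^ 3 * x ^ 4 - (1 / 2) * K ^ 2 * x ^ 2 + 3 * K) ≤ 16 / x := by
  have hK2x2 : 0 ≤ K ^ 2 * x ^ 2 := by positivity
  have hcubic : K ^ 2 * x ^ 4 ≤ K ^ 3 * x ^ 4 := by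
    nlinarith [mul_nonneg (sub_nonneg.2 hK) (by positivity : (0 : ℝ) ≤ K ^ 2 * x ^ 4)]
  have hquartic : 2 * K ^ 2 * x ^ 2 + K ^ 2 * x ^ 3 ≤ K ^ 2 * x ^ 4 := by
    nlinarith [mul_nonneg hK2x2 (mul_nonneg (sub_nonneg.2 hx) (by linarith : (0 : ℝ) ≤ x + 1))]
  rw [div_le_div_iff₀ (by nlinarith) (by linarith)]
  nlinarith

end BadComm

open BadComm Filter

/-- with `N₁ = 3`, `J = xK`, `N₂ = x²K`, the Jaccard similarity between
`𝐔_{K,3,x²K,xK}` and `𝐕_{K,3,x²K}` satisfies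
`0 ≤ S < (4K³x³ + 4K²x²)/((1/2)K³x⁴ − (1/2)K²x² + 3K)` and tends to `0` as `x → ∞`. -/
theorem statement10 (K : ℕ) (hK : 1 ≤ K) :
    (∀ x : ℕ, 1 ≤ x →
      0 ≤ jaccard (uLabel (x * K) : Fin (K * (3 + x ^ 2 * K)) → ℕ)
            (naturalLabel 3 (x ^ 2 * K)) ∧
      jaccard (uLabel (x * K) : Fin (K * (3 + x ^ 2 * K)) → ℕ)
            (naturalLabel 3 (x ^ 2 * K)) <
        (4 * (K : ℝ) ^ 3 * (x : ℝ) ^ 3 + 4 * (K : ℝ) ^ 2 * (x : ℝ) ^ 2) /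
          ((1 / 2) * (K : ℝ) ^ 3 * (x : ℝ) ^ 4 - (1 / 2) * (K : ℝ) ^ 2 * (x : ℝ) ^ 2
            + 3 * (K : ℝ))) ∧
    Tendsto (fun x : ℕ =>
        jaccard (uLabel (x * K) : Fin (K * (3 + x ^ 2 * K)) → ℕ)
          (naturalLabel 3 (x ^ 2 * K)))
      atTop (nhds 0) := by
  refine ⟨fun x hx => ⟨jaccard_nonneg _ _, jaccard_uLabel_naturalLabel_lt hK hx⟩, ?_⟩
  refine tendsto_of_tendsto_of_tendsto_of_le_of_le' tendsto_const_nhds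
    (tendsto_const_div_atTop_nhds_zero_nat 16) (.of_forall fun x => jaccard_nonneg _ _) ?_
  filter_upwards [eventually_ge_atTop 2] with x hx
  exact (jaccard_uLabel_naturalLabel_lt hK (by omega)).le.trans
    (jaccard_bound_le_sixteen_div (by exact_mod_cast hK) (by exact_mod_cast hx))
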